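/- Let a > 0, η > 0 and M > 0. Then there exists C > 0 such that for every s ≥ 0 and every measurable function g : ℝ × [0,s] → ℝ satisfying ‖g(·,τ)‖_{L^∞(ℝ)} ≤ (1+τ)^{-1} for all τ ∈ [0,s], ∫₀^s ∫_{-∞}^0 (s-τ)^{-1/2} e^{η y} exp(-(y + a(s-τ))²/(M(s-τ))) |g(y,τ)| dy dτ ≤ C (1+s)^{-1/2}. -/

import Mathlib

/-!
Write `t = s - τ` and `c = min (η a / 4) (a² / (4 M))`. For `y ≤ 0` either `y ≤ -a t / 2`, and then
half of `e^{η y}` is already `≤ e^{-c t}`, or `y + a t ≥ a t / 2`, and then the Gaussian factor is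
`≤ e^{-c t}`; so the kernel is at most `t^{-1/2} e^{-c t} e^{η y / 2}`, whose `y`-integral is
`2 / η · t^{-1/2} e^{-c t}`. Since `√(1 + s) ≤ (1 + τ)(1 + √t)`, the weight `(1 + τ)⁻¹ t^{-1/2}` is at
most `(1 + s)^{-1/2} (t^{-1/2} + 1)`, and the remaining `τ`-integral is bounded by
`∫₀^∞ (u^{-1/2} + 1) e^{-c u} du < ∞`.
-/

open MeasureTheory Real Set

theorem ae_norm_le_of_eLpNorm_top_le {α F : Type*} [MeasurableSpace α] {μ : Measure α}
    [NormedAddCommGroup F] {f : α → F} {C : ℝ} (hC : 0 ≤ C)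
    (hf : eLpNorm f ⊤ μ ≤ ENNReal.ofReal C) : ∀ᵐ x ∂μ, ‖f x‖ ≤ C := by
  rw [eLpNorm_exponent_top] at hf
  filter_upwards [enorm_ae_le_eLpNormEssSup f μ] with x hx
  rw [← ofReal_norm] at hx
  exact (ENNReal.ofReal_le_ofReal_iff hC).1 (hx.trans hf)

theorem setIntegral_mul_abs_le_of_le {α : Type*} [MeasurableSpace α] {μ : Measure α}
    {S : Set α} {f φ g : α → ℝ} {A B : ℝ} (hS : MeasurableSet S)
    (hf : ∀ y ∈ S, 0 ≤ f y) (hfφ : ∀ y ∈ S, f y ≤ A * φ y) (hφ : IntegrableOn φ S μ)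
    (hg : ∀ᵐ y ∂μ.restrict S, |g y| ≤ B) :
    ∫ y in S, f y * |g y| ∂μ ≤ B * A * ∫ y in S, φ y ∂μ := by
  rw [← integral_const_mul]
  refine integral_mono_of_nonneg ?_ (hφ.const_mul _) ?_
  · filter_upwards [ae_restrict_mem hS] with y hy
    exact mul_nonneg (hf y hy) (abs_nonneg _)
  · filter_upwards [ae_restrict_mem hS, hg] with y hy hgy
    calc f y * |g y| ≤ f y * B := mul_le_mul_of_nonneg_left hgy (hf y hy)
      _ ≤ A * φ y * B := mul_le_mul_of_nonneg_right (hfφ y hy) ((abs_nonneg _).trans hgy)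
      _ = B * A * φ y := by ring

section ReflectIoc

variable {E : Type*} [NormedAddCommGroup E] {f : ℝ → E} {s : ℝ}

theorem integrableOn_Ioc_comp_sub_left (hs : 0 ≤ s) (hf : IntegrableOn f (Ioc 0 s)) :
    IntegrableOn (fun τ => f (s - τ)) (Ioc 0 s) := by
  rw [← intervalIntegrable_iff_integrableOn_Ioc_of_le hs] at hf ⊢
  simpa using (hf.comp_sub_left s).symm

theorem setIntegral_Ioc_comp_sub_left [NormedSpace ℝ E] (hs : 0 ≤ s) :
    ∫ τ in Ioc 0 s, f (s - τ) = ∫ u in Ioc 0 s, f u := by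
  rw [← intervalIntegral.integral_of_le hs, ← intervalIntegral.integral_of_le hs,
    intervalIntegral.integral_comp_sub_left, sub_self, sub_zero]

end ReflectIoc

theorem exp_mul_mul_exp_neg_sq_div_le {a η M c t y : ℝ} (hη : 0 < η) (hM : 0 < M)
    (hcη : c ≤ η * a / 4) (hcM : c ≤ a ^ 2 / (4 * M)) (ht : 0 < t) (hy : y ≤ 0) :
    exp (η * y) * exp (-(y + a * t) ^ 2 / (M * t)) ≤ exp (η / 2 * y) * exp (-(c * t)) := by
  rw [← exp_add, ← exp_add, exp_le_exp, neg_div]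
  have hηy : η * y ≤ η / 2 * y := by nlinarith
  rcases le_or_gt y (-(a * t / 2)) with hfar | hnear
  · have : 0 ≤ (y + a * t) ^ 2 / (M * t) := by positivity
    nlinarith
  · have hsq : (a * t / 2) ^ 2 ≤ (y + a * t) ^ 2 :=
      pow_le_pow_left₀ (by linarith) (by linarith) 2
    rw [le_div_iff₀ (by positivity)] at hcM
    have : c * t ≤ (y + a * t) ^ 2 / (M * t) := by
      rw [le_div_iff₀ (by positivity)]
      nlinarith [mul_le_mul_of_nonneg_right hcM (sq_nonneg t)]
    linarith

theorem inv_one_add_mul_rpow_neg_half_le {τ s : ℝ} (hτ : 0 ≤ τ) (hτs : τ < s) :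
    (1 + τ)⁻¹ * (s - τ) ^ (-(1:ℝ)/2) ≤ (1 + s) ^ (-(1:ℝ)/2) * ((s - τ) ^ (-(1:ℝ)/2) + 1) := by
  have rpow_neg_half : ∀ x : ℝ, 0 ≤ x → x ^ (-(1:ℝ)/2) = (√x)⁻¹ := fun x hx => by
    rw [neg_div, rpow_neg hx, ← sqrt_eq_rpow]
  rw [rpow_neg_half _ (by linarith), rpow_neg_half _ (by linarith)]
  have hu : 0 < √(s - τ) := sqrt_pos.2 (by linarith)
  have hs : s = τ + √(s - τ) ^ 2 := by rw [sq_sqrt (by linarith)]; ring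
  have key : √(1 + s) ≤ (1 + τ) * (1 + √(s - τ)) := by
    refine sqrt_le_iff.2 ⟨by positivity, ?_⟩
    nth_rw 1 [hs]
    nlinarith [mul_nonneg hτ hu.le, mul_nonneg (mul_nonneg hτ hτ) (sq_nonneg √(s - τ)),
      mul_nonneg hτ (sq_nonneg √(s - τ)), mul_nonneg (mul_nonneg hτ hτ) hu.le]
  have hw : 0 < √(1 + s) := sqrt_pos.2 (by linarith)
  field_simp
  exact key

noncomputable def decayWeight (c u : ℝ) : ℝ := (u ^ (-(1:ℝ)/2) + 1) * exp (-(c * u))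

theorem decayWeight_nonneg (c : ℝ) {u : ℝ} (hu : 0 ≤ u) : 0 ≤ decayWeight c u :=
  mul_nonneg (add_nonneg (rpow_nonneg hu _) zero_le_one) (exp_pos _).le

theorem integrableOn_decayWeight {c : ℝ} (hc : 0 < c) : IntegrableOn (decayWeight c) (Ioi 0) := by
  have hsing : IntegrableOn (fun u : ℝ => u ^ (-(1:ℝ)/2) * exp (-c * u ^ (1:ℝ))) (Ioi 0) :=
    integrableOn_rpow_mul_exp_neg_mul_rpow (by norm_num) zero_lt_one hc
  refine (hsing.add (exp_neg_integrableOn_Ioi 0 hc)).congr_fun (fun u _ => ?_) measurableSet_Ioi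
  simp only [decayWeight, Pi.add_apply, rpow_one, neg_mul]
  ring

theorem setIntegral_Iic_gaussian_mul_abs_le {a η M c τ s : ℝ} {h : ℝ → ℝ} (hη : 0 < η)
    (hM : 0 < M) (hcη : c ≤ η * a / 4) (hcM : c ≤ a ^ 2 / (4 * M)) (hτ : 0 ≤ τ) (hτs : τ < s)
    (hh : eLpNorm h ⊤ volume ≤ ENNReal.ofReal ((1 + τ)⁻¹)) :
    ∫ y in Iic (0:ℝ), (s - τ) ^ (-(1:ℝ)/2) * exp (η * y) *
        exp (-(y + a * (s - τ)) ^ 2 / (M * (s - τ))) * |h y|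
      ≤ 2 / η * (1 + s) ^ (-(1:ℝ)/2) * decayWeight c (s - τ) := by
  have ht : 0 ≤ (s - τ) ^ (-(1:ℝ)/2) := rpow_nonneg (by linarith) _
  have hhτ : ∀ᵐ y ∂volume.restrict (Iic 0), |h y| ≤ (1 + τ)⁻¹ :=
    ae_restrict_of_ae (ae_norm_le_of_eLpNorm_top_le (by positivity) hh)
  have hKy : ∫ y in Iic (0:ℝ), exp (η / 2 * y) = 2 / η := by
    rw [integral_exp_mul_Iic (by positivity), mul_zero, exp_zero]
    field_simp
  calc _ ≤ (1 + τ)⁻¹ * ((s - τ) ^ (-(1:ℝ)/2) * exp (-(c * (s - τ)))) *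
        ∫ y in Iic (0:ℝ), exp (η / 2 * y) := by
        refine setIntegral_mul_abs_le_of_le measurableSet_Iic (fun y _ => by positivity)
          (fun y hy => ?_) (integrableOn_exp_mul_Iic (by positivity) 0) hhτ
        have := mul_le_mul_of_nonneg_left
          (exp_mul_mul_exp_neg_sq_div_le hη hM hcη hcM (sub_pos.2 hτs) hy) ht
        linarith
    _ ≤ (1 + s) ^ (-(1:ℝ)/2) * ((s - τ) ^ (-(1:ℝ)/2) + 1) * exp (-(c * (s - τ))) * (2 / η) := by
        rw [hKy, ← mul_assoc]
        gcongr ?_ * _ * _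
        exact inv_one_add_mul_rpow_neg_half_le hτ hτs
    _ = _ := by rw [decayWeight]; ring

theorem setIntegral_Ioc_le_mul_of_le_comp_sub {F w : ℝ → ℝ} {s A : ℝ} (hs : 0 ≤ s)
    (hw : IntegrableOn w (Ioi 0)) (hw0 : ∀ u ∈ Ioi 0, 0 ≤ w u)
    (hF0 : ∀ τ ∈ Ioo 0 s, 0 ≤ F τ) (hF : ∀ τ ∈ Ioo 0 s, F τ ≤ A * w (s - τ)) (hA : 0 ≤ A) :
    ∫ τ in Ioc 0 s, F τ ≤ A * ∫ u in Ioi 0, w u := by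
  have hIoo : ∀ᵐ τ ∂volume.restrict (Ioc 0 s), τ ∈ Ioo 0 s := by
    rw [← Measure.restrict_congr_set Ioo_ae_eq_Ioc]
    exact ae_restrict_mem measurableSet_Ioo
  calc ∫ τ in Ioc 0 s, F τ ≤ ∫ τ in Ioc 0 s, A * w (s - τ) :=
        integral_mono_of_nonneg (hIoo.mono hF0)
          ((integrableOn_Ioc_comp_sub_left hs (hw.mono_set Ioc_subset_Ioi_self)).const_mul _)
          (hIoo.mono hF)
    _ = A * ∫ u in Ioc 0 s, w u := by
        rw [integral_const_mul, setIntegral_Ioc_comp_sub_left hs]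
    _ ≤ A * ∫ u in Ioi 0, w u := by
        refine mul_le_mul_of_nonneg_left (setIntegral_mono_set hw ?_ ?_) hA
        · exact ae_restrict_of_forall_mem measurableSet_Ioi hw0
        · exact Ioc_subset_Ioi_self.eventuallyLE

theorem undercompressive_correction_bound (a η M : ℝ) (ha : 0 < a) (hη : 0 < η)
    (hM : 0 < M) :
    ∃ C : ℝ, 0 < C ∧ ∀ s : ℝ, 0 ≤ s → ∀ g : ℝ → ℝ → ℝ,
      Measurable (Function.uncurry g) →
      (∀ τ ∈ Icc (0:ℝ) s, eLpNorm (fun y => g y τ) ⊤ volume ≤ ENNReal.ofReal ((1 + τ)⁻¹)) →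
      (∫ τ in Ioc (0:ℝ) s, ∫ y in Iic (0:ℝ),
          (s - τ) ^ (-(1:ℝ)/2) * Real.exp (η * y) *
            Real.exp (-(y + a * (s - τ))^2 / (M * (s - τ))) * |g y τ|)
        ≤ C * (1 + s) ^ (-(1:ℝ)/2) := by
  obtain ⟨c, hc, hcη, hcM⟩ : ∃ c : ℝ, 0 < c ∧ c ≤ η * a / 4 ∧ c ≤ a ^ 2 / (4 * M) :=
    ⟨_, lt_min (by positivity) (by positivity), min_le_left _ _, min_le_right _ _⟩
  set K := ∫ u in Ioi (0:ℝ), decayWeight c u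
  have hK : 0 ≤ K := setIntegral_nonneg measurableSet_Ioi fun u hu => decayWeight_nonneg c hu.le
  refine ⟨2 / η * K + 1, by positivity, fun s hs g _ hg => ?_⟩
  have hw : 0 ≤ (1 + s) ^ (-(1:ℝ)/2) := rpow_nonneg (by linarith) _
  calc _ ≤ 2 / η * (1 + s) ^ (-(1:ℝ)/2) * K := by
        refine setIntegral_Ioc_le_mul_of_le_comp_sub hs (integrableOn_decayWeight hc)
          (fun u hu => decayWeight_nonneg c hu.le) (fun τ hτ => ?_)
          (fun τ hτ => setIntegral_Iic_gaussian_mul_abs_le hη hM hcη hcM hτ.1.le hτ.2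
            (hg τ ⟨hτ.1.le, hτ.2.le⟩)) (by positivity)
        have ht : 0 ≤ (s - τ) ^ (-(1:ℝ)/2) := rpow_nonneg (by linarith [hτ.2]) _
        exact integral_nonneg fun y => by positivity
    _ ≤ (2 / η * K + 1) * (1 + s) ^ (-(1:ℝ)/2) := by nlinarith
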